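/- arXiv:2008.07322 — 2 statements merged into one kernel-verified Lean document; each statement's English description precedes it below -/
import Mathlib

section
/- If G is a finite Z-group (all Sylow subgroups cyclic) with trivial center, then for any two nonidentity elements x, y of G, the subgroup generated by x and y is cyclic if and only if x and y commute. -/
/-- The cyclic graph of a group: vertices are the nonidentity elements,
two distinct vertices are adjacent iff they generate a cyclic subgroup. -/
def cyclicGraph (G : Type*) [Group G] : SimpleGraph {g : G // g ≠ 1} where
  Adj x y := x ≠ y ∧ IsCyclic (Subgroup.closure ({x.1, y.1} : Set G))
  symm := by
    constructor
    rintro x y ⟨hne, hc⟩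
    exact ⟨hne.symm, by rwa [Set.pair_comm]⟩
  loopless := by constructor; rintro x ⟨hne, -⟩; exact hne rfl

/-- A group is a Frobenius group if it has a nontrivial proper subgroup `H`
with `H ∩ H^g = 1` for every `g ∉ H`. -/
def IsFrobenius (G : Type*) [Group G] : Prop :=
  ∃ H : Subgroup G, H ≠ ⊥ ∧ H ≠ ⊤ ∧
    ∀ g : G, g ∉ H → ∀ x : G, x ∈ H → g * x * g⁻¹ ∈ H → x = 1

/-- A group is generalized quaternion if it is isomorphic to `QuaternionGroup (2 ^ m)`
for some `m ≥ 1` (i.e. a generalized quaternion group of order `2 ^ (m + 2)`). -/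
def IsGeneralizedQuaternion (P : Type*) [Group P] : Prop :=
  ∃ m : ℕ, 1 ≤ m ∧ Nonempty (P ≃* QuaternionGroup (2 ^ m))

/-
An abelian Z-group is nilpotent, hence cyclic; and subgroups of Z-groups are Z-groups.
So `⟨x, y⟩` is cyclic exactly when it is abelian, i.e. when `x` and `y` commute.
-/

open scoped IsMulCommutative in
theorem IsZGroup.isCyclic_of_isMulCommutative {G : Type*} [Group G] [Finite G] [IsZGroup G]
    [IsMulCommutative G] : IsCyclic G :=
  inferInstance

theorem IsZGroup.isCyclic_subgroup_iff {G : Type*} [Group G] [Finite G] [IsZGroup G]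
    (H : Subgroup G) : IsCyclic H ↔ IsMulCommutative H :=
  ⟨fun _ ↦ inferInstance, fun _ ↦ isCyclic_of_isMulCommutative⟩

theorem Subgroup.isMulCommutative_closure_pair_iff {G : Type*} [Group G] (x y : G) :
    IsMulCommutative (closure ({x, y} : Set G)) ↔ Commute x y := by
  constructor
  · intro h
    have hx : x ∈ closure ({x, y} : Set G) := subset_closure (Set.mem_insert _ _)
    have hy : y ∈ closure ({x, y} : Set G) := subset_closure (Set.mem_insert_of_mem _ rfl)
    exact congrArg Subtype.val (mul_comm' (⟨x, hx⟩ : closure ({x, y} : Set G)) ⟨y, hy⟩)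
  · intro h
    refine isMulCommutative_closure ?_
    rintro a (rfl | rfl) b (rfl | rfl)
    exacts [rfl, h, h.symm, rfl]

theorem stmt_0_general {G : Type*} [Group G] [Finite G] (hZ : IsZGroup G) (x y : G) :
    IsCyclic (Subgroup.closure ({x, y} : Set G)) ↔ Commute x y := by
  rw [IsZGroup.isCyclic_subgroup_iff, Subgroup.isMulCommutative_closure_pair_iff]

theorem stmt_0 {G : Type*} [Group G] [Finite G] (hZ : IsZGroup G)
    (hc : Subgroup.center G = ⊥) (x y : G) (hx : x ≠ 1) (hy : y ≠ 1) :
    IsCyclic (Subgroup.closure ({x, y} : Set G)) ↔ Commute x y :=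
  stmt_0_general hZ x y
end

section
/- If G is a finite Frobenius group, then the cyclic graph Δ(G) is disconnected. -/
/-!
Two vertices adjacent in `Δ(G)` commute, and in a Frobenius group with complement `H` the
centralizer of a nonidentity `x ∈ H` lies in `H`: if `g ∉ H` commutes with `x`, then
`x = g x g⁻¹ ∈ H ∩ H^g = 1`. Hence no edge of `Δ(G)` leaves `H \ {1}`, which is neither empty nor
all of `G \ {1}`.
-/

/-- `H ∩ H^g = 1` for every `g ∉ H`. -/
def Subgroup.IsMalnormal {G : Type*} [Group G] (H : Subgroup G) : Prop :=
  ∀ g : G, g ∉ H → ∀ x : G, x ∈ H → g * x * g⁻¹ ∈ H → x = 1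

theorem Subgroup.IsMalnormal.mem_of_commute {G : Type*} [Group G] {H : Subgroup G}
    (hH : H.IsMalnormal) {x g : G} (hxH : x ∈ H) (hx : x ≠ 1) (hxg : Commute x g) : g ∈ H := by
  by_contra hg
  have hconj : g * x * g⁻¹ = x := by rw [← hxg.eq, mul_inv_cancel_right]
  exact hx (hH g hg x hxH (by rwa [hconj]))

theorem Commute.of_isCyclic_closure_pair {G : Type*} [Group G] {x y : G}
    (h : IsCyclic (Subgroup.closure ({x, y} : Set G))) : Commute x y := by
  let _ : CommGroup (Subgroup.closure ({x, y} : Set G)) := IsCyclic.commGroup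
  exact congrArg Subtype.val
    (mul_comm (⟨x, Subgroup.subset_closure (by simp)⟩ : Subgroup.closure ({x, y} : Set G))
      ⟨y, Subgroup.subset_closure (by simp)⟩)

theorem cyclicGraph.Adj.commute {G : Type*} [Group G] {x y : {g : G // g ≠ 1}}
    (h : (cyclicGraph G).Adj x y) : Commute x.1 y.1 :=
  .of_isCyclic_closure_pair h.2

namespace SimpleGraph

variable {V : Type*} {Γ : SimpleGraph V} {S : Set V}

theorem Reachable.mem_of_adj_closed (hS : ∀ a b, Γ.Adj a b → a ∈ S → b ∈ S) {u v : V}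
    (huv : Γ.Reachable u v) (hu : u ∈ S) : v ∈ S := by
  rw [reachable_iff_reflTransGen] at huv
  induction huv with
  | refl => exact hu
  | tail _ hbc ih => exact hS _ _ hbc ih

theorem not_connected_of_adj_closed (hS : ∀ a b, Γ.Adj a b → a ∈ S → b ∈ S) {u v : V}
    (hu : u ∈ S) (hv : v ∉ S) : ¬ Γ.Connected :=
  fun hΓ => hv ((hΓ u v).mem_of_adj_closed hS hu)

end SimpleGraph

theorem stmt_4_general {G : Type*} [Group G] (hF : IsFrobenius G) :
    ¬ (cyclicGraph G).Connected := by
  obtain ⟨H, hbot, htop, hH⟩ := hF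
  obtain ⟨⟨x, hxH⟩, hx⟩ := Subgroup.ne_bot_iff_exists_ne_one.mp hbot
  obtain ⟨y, hyH⟩ := SetLike.exists_not_mem_of_ne_top H htop
  have hx1 : x ≠ 1 := fun h => hx (Subtype.ext h)
  have hy1 : y ≠ 1 := fun h => hyH (h ▸ H.one_mem)
  have hS (a b : {g : G // g ≠ 1}) (hab : (cyclicGraph G).Adj a b) (ha : a.1 ∈ H) : b.1 ∈ H :=
    Subgroup.IsMalnormal.mem_of_commute hH ha a.2 (cyclicGraph.Adj.commute hab)
  exact SimpleGraph.not_connected_of_adj_closed (S := {a | a.1 ∈ H})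
    (u := ⟨x, hx1⟩) (v := ⟨y, hy1⟩) hS hxH hyH

theorem stmt_4 {G : Type*} [Group G] [Finite G] (hF : IsFrobenius G) :
    ¬ (cyclicGraph G).Connected :=
  stmt_4_general hF
end
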